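/- For every r_user with 0 < r_user < r_* (r_* ≈ 4.864 the positive root of 1+2r−r^{3/2}=0) there exists a constant m_1 > 0, depending only on r_user, with the following property: for every N ≥ 2, every family of positive step sizes τ_1,…,τ_N whose step ratios satisfy 0 < r_k ≤ r_user for 2 ≤ k ≤ N, every n with 2 ≤ n ≤ N, and every real vector w = (w_2,…,w_n), one has w^T (B̃_2 + B̃_2^T) w = 2 Σ_{k=2}^{n} b̃_0^{(k)} w_k² + 2 Σ_{k=3}^{n} b̃_1^{(k)} w_k w_{k-1} ≥ m_1 Σ_{k=2}^{n} w_k²; that is, the minimum eigenvalue of the symmetric matrix B̃_2 + B̃_2^T is at least m_1. -/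

import Mathlib

/-- The adjacent time-step ratio `r_k := τ_k / τ_{k-1}`. -/
noncomputable def ratio (τ : ℕ → ℝ) (k : ℕ) : ℝ := τ k / τ (k - 1)

/-- The step-scaled BDF2 kernel `b̃_0^{(k)} := (1+2r_k)/(1+r_k)`. -/
noncomputable def tb0 (τ : ℕ → ℝ) (k : ℕ) : ℝ :=
  (1 + 2 * ratio τ k) / (1 + ratio τ k)

/-- The step-scaled BDF2 kernel `b̃_1^{(k)} := -r_k^{3/2}/(1+r_k)`. -/
noncomputable def tb1 (τ : ℕ → ℝ) (k : ℕ) : ℝ :=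
  -(ratio τ k ^ ((3 : ℝ) / 2)) / (1 + ratio τ k)

/-- Monotonicity bound: `(1+2u)/(1+u) + θ r/(1+r) ≤ 2(1+2r)/(1+r)` for `θ = (1+2u)/u`. -/
private lemma lemA (u r : ℝ) (hu : 0 < u) (hr : 0 < r) (hru : r ≤ u) :
    (1+2*u)/(1+u) + ((1+2*u)/u)*(r/(1+r)) ≤ 2*((1+2*r)/(1+r)) := by
  have h1u : (0:ℝ) < 1 + u := by linarith
  have h1r : (0:ℝ) < 1 + r := by linarith
  rw [← sub_nonneg]
  have : 2*((1+2*r)/(1+r)) - ((1+2*u)/(1+u) + ((1+2*u)/u)*(r/(1+r)))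
      = (u - r) / (u*(1+u)*(1+r)) := by
    field_simp
    ring
  rw [this]
  exact div_nonneg (by linarith) (by positivity)

/-- Weighted AM–GM for the off-diagonal term, written with `s = √r`. -/
private lemma lemB (θ s a b : ℝ) (hθ : 0 < θ) (hs : 0 < s) :
    -((θ*(s^2/(1+s^2)))*a^2) - ((s^2)^2/(θ*(1+s^2)))*b^2 ≤ 2*(-(s^2*s)/(1+s^2))*a*b := by
  have h1 : (0:ℝ) < 1 + s^2 := by positivity
  rw [← sub_nonneg]
  have : 2*(-(s^2*s)/(1+s^2))*a*b - (-((θ*(s^2/(1+s^2)))*a^2) - ((s^2)^2/(θ*(1+s^2)))*b^2)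
      = (θ*s*a - s^2*b)^2/(θ*(1+s^2)) := by
    field_simp
    ring
  rw [this]
  positivity

/-- The charge forwarded to the previous index is at most `S = u³/((1+u)(1+2u))`. -/
private lemma lemC (u r : ℝ) (hu : 0 < u) (hr : 0 < r) (hru : r ≤ u) :
    r^2/(((1+2*u)/u)*(1+r)) ≤ u^3/((1+u)*(1+2*u)) := by
  have h1u : (0:ℝ) < 1 + u := by linarith
  have h1r : (0:ℝ) < 1 + r := by linarith
  have h12u : (0:ℝ) < 1 + 2*u := by linarith
  rw [div_le_div_iff₀ (by positivity) (by positivity)]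
  have key : u^3*((1+2*u)/u*(1+r)) = u^2*(1+2*u)*(1+r) := by
    field_simp
  rw [key]
  have base : r^2*(1+u) ≤ u^2*(1+r) := by
    nlinarith [mul_nonneg (mul_pos hr hu).le (sub_nonneg.2 hru),
      mul_nonneg (sub_nonneg.2 hru) (by linarith : (0:ℝ) ≤ u + r)]
  nlinarith [mul_le_mul_of_nonneg_right base h12u.le]

theorem step_scaled_matrix_min_eigenvalue
    (ruser rstar : ℝ) (hruser_pos : 0 < ruser)
    (hrstar_pos : 0 < rstar)
    (hrstar_root : 1 + 2 * rstar - rstar ^ ((3 : ℝ) / 2) = 0)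
    (hru : ruser < rstar) :
    ∃ m1 : ℝ, 0 < m1 ∧
      ∀ (N : ℕ), 2 ≤ N → ∀ τ : ℕ → ℝ,
        (∀ k, 1 ≤ k → k ≤ N → 0 < τ k) →
        (∀ k, 2 ≤ k → k ≤ N → 0 < ratio τ k ∧ ratio τ k ≤ ruser) →
        ∀ n, 2 ≤ n → n ≤ N → ∀ w : ℕ → ℝ,
          2 * ∑ k ∈ Finset.Icc 2 n, tb0 τ k * w k ^ 2
            + 2 * ∑ k ∈ Finset.Icc 3 n, tb1 τ k * w k * w (k - 1)
          ≥ m1 * ∑ k ∈ Finset.Icc 2 n, w k ^ 2 := by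
  set u := ruser with hu_def
  have h1u : (0:ℝ) < 1 + u := by linarith
  have h12u : (0:ℝ) < 1 + 2*u := by linarith
  -- rstar is a root of r³ = (1+2r)²
  have hcube : rstar ^ 3 = (1 + 2*rstar)^2 := by
    have h1 : rstar ^ ((3:ℝ)/2) = 1 + 2*rstar := by linarith
    have h2 : (rstar ^ ((3:ℝ)/2))^2 = rstar ^ 3 := by
      rw [← Real.rpow_natCast (rstar ^ ((3:ℝ)/2)) 2, ← Real.rpow_mul hrstar_pos.le,
        ← Real.rpow_natCast rstar 3]
      norm_num
    rw [h1] at h2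
    linarith
  -- hence u³ < (1+2u)²
  have hu3 : u^3 < (1+2*u)^2 := by
    by_cases h48 : u ≤ 4.8
    · nlinarith [mul_nonneg (sub_nonneg.2 h48) (sq_nonneg u),
        mul_nonneg hruser_pos.le (sub_nonneg.2 h48)]
    · push_neg at h48
      have h48' : (4.8:ℝ) < rstar := lt_trans h48 hru
      nlinarith [mul_pos (sub_pos.2 hru)
        (by nlinarith : (0:ℝ) < rstar^2 + rstar*u + u^2 - 4*rstar - 4*u - 4)]
  set θ : ℝ := (1+2*u)/u with hθ_def
  have hθ : 0 < θ := by positivity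
  set S : ℝ := u^3/((1+u)*(1+2*u)) with hS_def
  have hS : 0 ≤ S := by positivity
  set m1 : ℝ := ((1+2*u)^2 - u^3)/((1+2*u)*(1+u)) with hm1_def
  have hm1S : m1 + S = (1+2*u)/(1+u) := by
    rw [hm1_def, hS_def]
    field_simp
    ring
  refine ⟨m1, div_pos (by linarith) (by positivity), ?_⟩
  intro N hN τ hτ hr n hn2 hnN w
  -- strengthened claim
  have key : ∀ n, 2 ≤ n → n ≤ N →
      2 * ∑ k ∈ Finset.Icc 2 n, tb0 τ k * w k ^ 2
        + 2 * ∑ k ∈ Finset.Icc 3 n, tb1 τ k * w k * w (k - 1)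
      ≥ m1 * ∑ k ∈ Finset.Icc 2 n, w k ^ 2 + S * w n ^ 2 := by
    intro n hn2
    induction n, hn2 using Nat.le_induction with
    | base =>
      intro hN2
      rw [show Finset.Icc 3 2 = ∅ from Finset.Icc_eq_empty (by norm_num), Finset.Icc_self,
        Finset.sum_singleton, Finset.sum_empty, Finset.sum_singleton]
      obtain ⟨hrpos, hrle⟩ := hr 2 le_rfl hN2
      have hA := lemA u (ratio τ 2) hruser_pos hrpos hrle
      have hθr : 0 ≤ ((1+2*u)/u)*(ratio τ 2/(1+ratio τ 2)) := by
        have : (0:ℝ) < 1 + ratio τ 2 := by linarith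
        positivity
      have h2tb0 : m1 + S ≤ 2 * tb0 τ 2 := by
        rw [hm1S, tb0]
        linarith
      nlinarith [sq_nonneg (w 2), mul_le_mul_of_nonneg_right h2tb0 (sq_nonneg (w 2))]
    | succ n hn ih =>
      intro hn1N
      have hnN' : n ≤ N := by omega
      have ihn := ih hnN'
      rw [Finset.sum_Icc_succ_top (by omega : 2 ≤ n + 1),
        Finset.sum_Icc_succ_top (by omega : 3 ≤ n + 1),
        Finset.sum_Icc_succ_top (by omega : 2 ≤ n + 1)]
      obtain ⟨hrpos, hrle⟩ := hr (n+1) (by omega) hn1N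
      set r : ℝ := ratio τ (n+1) with hr_def
      have h1r : (0:ℝ) < 1 + r := by linarith
      -- diagonal bound
      have hA := lemA u r hruser_pos hrpos hrle
      have h2tb0 : m1 + S + θ*(r/(1+r)) ≤ 2 * tb0 τ (n+1) := by
        rw [hm1S, tb0]
        linarith
      have hDiag : (m1 + S + θ*(r/(1+r))) * w (n+1) ^ 2 ≤ 2 * (tb0 τ (n+1) * w (n+1) ^ 2) := by
        have := mul_le_mul_of_nonneg_right h2tb0 (sq_nonneg (w (n+1)))
        linarith [this]
      -- off-diagonal bound
      have hs : 0 < Real.sqrt r := Real.sqrt_pos.2 hrpos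
      have hs2 : Real.sqrt r ^ 2 = r := Real.sq_sqrt hrpos.le
      have h32 : r ^ ((3:ℝ)/2) = Real.sqrt r ^ 2 * Real.sqrt r := by
        rw [hs2, show ((3:ℝ)/2) = 1 + 1/2 by norm_num, Real.rpow_add hrpos,
          Real.rpow_one, ← Real.sqrt_eq_rpow]
      have hB := lemB θ (Real.sqrt r) (w (n+1)) (w n) hθ hs
      rw [hs2] at hB
      have htb1 : tb1 τ (n+1) = -(r*Real.sqrt r)/(1+r) := by
        rw [tb1, ← hr_def, h32, hs2]
      have hCross : -((θ*(r/(1+r)))*(w (n+1))^2) - (r^2/(θ*(1+r)))*(w n)^2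
          ≤ 2 * (tb1 τ (n+1) * w (n+1) * w n) := by
        rw [htb1]
        linear_combination hB
      -- forwarded charge bound
      have hC := lemC u r hruser_pos hrpos hrle
      rw [← hθ_def, ← hS_def] at hC
      have hC' : (r^2/(θ*(1+r)))*(w n)^2 ≤ S*(w n)^2 :=
        mul_le_mul_of_nonneg_right hC (sq_nonneg (w n))
      simp only [Nat.add_sub_cancel]
      linarith [ihn, hDiag, hCross, hC']
  have hkey := key n hn2 hnN
  have hlast : 0 ≤ S * w n ^ 2 := mul_nonneg hS (sq_nonneg (w n))
  linarith [hkey, hlast]
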